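/- The lattice D4 ⊕ A2 ⊕ A2 ⊕ A1 cannot be embedded in the lattice H ⊕ E8; that is, there is no 10 × 9 integer matrix M such that Mᵀ · G(H ⊕ E8) · M equals the Gram matrix of D4 ⊕ 2A2 ⊕ A1. -/
import Mathlib

open Matrix

/-- Gram matrix of the ambient lattice (10 × 10). -/
def ambientGram : Matrix (Fin 10) (Fin 10) ℤ :=
  !![0, 1, 0, 0, 0, 0, 0, 0, 0, 0;
      1, 0, 0, 0, 0, 0, 0, 0, 0, 0;
      0, 0, -2, 1, 0, 0, 0, 0, 0, 0;
      0, 0, 1, -2, 1, 0, 0, 0, 0, 0;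
      0, 0, 0, 1, -2, 1, 0, 0, 0, 1;
      0, 0, 0, 0, 1, -2, 1, 0, 0, 0;
      0, 0, 0, 0, 0, 1, -2, 1, 0, 0;
      0, 0, 0, 0, 0, 0, 1, -2, 1, 0;
      0, 0, 0, 0, 0, 0, 0, 1, -2, 0;
      0, 0, 0, 0, 1, 0, 0, 0, 0, -2]

/-- Gram matrix of the root lattice to be embedded (9 × 9). -/
def rootGram : Matrix (Fin 9) (Fin 9) ℤ :=
  !![-2, 1, 0, 0, 0, 0, 0, 0, 0;
      1, -2, 1, 1, 0, 0, 0, 0, 0;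
      0, 1, -2, 0, 0, 0, 0, 0, 0;
      0, 1, 0, -2, 0, 0, 0, 0, 0;
      0, 0, 0, 0, -2, 1, 0, 0, 0;
      0, 0, 0, 0, 1, -2, 0, 0, 0;
      0, 0, 0, 0, 0, 0, -2, 1, 0;
      0, 0, 0, 0, 0, 0, 1, -2, 0;
      0, 0, 0, 0, 0, 0, 0, 0, -2]

namespace Stmt10Helpers

/-- Reduction mod 3 as a ring hom. -/
def φ : ℤ →+* ZMod 3 := Int.castRingHom (ZMod 3)

/-- The ambient Gram matrix reduced mod 3. -/
def G3 : Matrix (Fin 10) (Fin 10) (ZMod 3) := ambientGram.map φ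

/-- The root Gram matrix reduced mod 3. -/
def B3 : Matrix (Fin 9) (Fin 9) (ZMod 3) := rootGram.map φ

/-- Inverse of `G3` mod 3. -/
def Ginv : Matrix (Fin 10) (Fin 10) (ZMod 3) :=
  !![0, 1, 0, 0, 0, 0, 0, 0, 0, 0;
     1, 0, 0, 0, 0, 0, 0, 0, 0, 0;
     0, 0, 2, 2, 2, 1, 0, 2, 1, 1;
     0, 0, 2, 1, 1, 2, 0, 1, 2, 2;
     0, 0, 2, 1, 0, 0, 0, 0, 0, 0;
     0, 0, 1, 2, 0, 1, 0, 2, 1, 0;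
     0, 0, 0, 0, 0, 0, 0, 1, 2, 0;
     0, 0, 2, 1, 0, 2, 1, 0, 0, 0;
     0, 0, 1, 2, 0, 1, 2, 0, 1, 0;
     0, 0, 1, 2, 0, 0, 0, 0, 0, 1]

/-- The two radical vectors of the two A2 blocks mod 3, as rows. -/
def E2 : Matrix (Fin 2) (Fin 9) (ZMod 3) := !![0,0,0,0,1,2,0,0,0; 0,0,0,0,0,0,1,2,0]

theorem hGinv : Ginv * G3 = 1 := by decide

theorem hEB : E2 * B3 = 0 := by decide

theorem hEt : ∀ v : Fin 2 → ZMod 3, E2ᵀ *ᵥ v = 0 → v = 0 := by decide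

/-- Canonical integer lift of a mod-3 kernel vector of `B3`. -/
def liftVec (a b : ZMod 3) : Fin 9 → ℤ :=
  ![0,0,0,0,(a.val:ℤ),((2*a).val:ℤ),(b.val:ℤ),((2*b).val:ℤ),0]

theorem hq : ∀ a b : ZMod 3, ¬(a = 0 ∧ b = 0) →
    ¬ ((9:ℤ) ∣ liftVec a b ⬝ᵥ (rootGram *ᵥ liftVec a b)) := by decide

theorem char3 (x : ZMod 3) : 3 * x = 0 := by
  have h : (3 : ZMod 3) = 0 := rfl
  rw [h, zero_mul]

theorem sum9 {β : Type*} [AddCommMonoid β] (f : Fin 9 → β) :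
    ∑ i, f i = f 0 + f 1 + f 2 + f 3 + f 4 + f 5 + f 6 + f 7 + f 8 := by
  rw [Fin.sum_univ_castSucc, Fin.sum_univ_eight]
  rfl

/-- Kernel of B3 mod 3, componentwise. -/
theorem kernelB (c : Fin 9 → ZMod 3) (h : B3 *ᵥ c = 0) :
    c 0 = 0 ∧ c 1 = 0 ∧ c 2 = 0 ∧ c 3 = 0 ∧ c 5 = 2 * c 4 ∧ c 7 = 2 * c 6 ∧ c 8 = 0 := by
  have h0 : ∑ j, B3 0 j * c j = 0 := congrFun h 0
  rw [sum9] at h0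
  simp only [show B3 0 0 = 1 from by decide, show B3 0 1 = 1 from by decide, show B3 0 2 = 0 from by decide, show B3 0 3 = 0 from by decide, show B3 0 4 = 0 from by decide, show B3 0 5 = 0 from by decide, show B3 0 6 = 0 from by decide, show B3 0 7 = 0 from by decide, show B3 0 8 = 0 from by decide, zero_mul, one_mul, zero_add, add_zero] at h0
  have h1 : ∑ j, B3 1 j * c j = 0 := congrFun h 1
  rw [sum9] at h1
  simp only [show B3 1 0 = 1 from by decide, show B3 1 1 = 1 from by decide, show B3 1 2 = 1 from by decide, show B3 1 3 = 1 from by decide, show B3 1 4 = 0 from by decide, show B3 1 5 = 0 from by decide, show B3 1 6 = 0 from by decide, show B3 1 7 = 0 from by decide, show B3 1 8 = 0 from by decide, zero_mul, one_mul, zero_add, add_zero] at h1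
  have h2 : ∑ j, B3 2 j * c j = 0 := congrFun h 2
  rw [sum9] at h2
  simp only [show B3 2 0 = 0 from by decide, show B3 2 1 = 1 from by decide, show B3 2 2 = 1 from by decide, show B3 2 3 = 0 from by decide, show B3 2 4 = 0 from by decide, show B3 2 5 = 0 from by decide, show B3 2 6 = 0 from by decide, show B3 2 7 = 0 from by decide, show B3 2 8 = 0 from by decide, zero_mul, one_mul, zero_add, add_zero] at h2
  have h3 : ∑ j, B3 3 j * c j = 0 := congrFun h 3
  rw [sum9] at h3
  simp only [show B3 3 0 = 0 from by decide, show B3 3 1 = 1 from by decide, show B3 3 2 = 0 from by decide, show B3 3 3 = 1 from by decide, show B3 3 4 = 0 from by decide, show B3 3 5 = 0 from by decide, show B3 3 6 = 0 from by decide, show B3 3 7 = 0 from by decide, show B3 3 8 = 0 from by decide, zero_mul, one_mul, zero_add, add_zero] at h3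
  have h4 : ∑ j, B3 4 j * c j = 0 := congrFun h 4
  rw [sum9] at h4
  simp only [show B3 4 0 = 0 from by decide, show B3 4 1 = 0 from by decide, show B3 4 2 = 0 from by decide, show B3 4 3 = 0 from by decide, show B3 4 4 = 1 from by decide, show B3 4 5 = 1 from by decide, show B3 4 6 = 0 from by decide, show B3 4 7 = 0 from by decide, show B3 4 8 = 0 from by decide, zero_mul, one_mul, zero_add, add_zero] at h4
  have h6 : ∑ j, B3 6 j * c j = 0 := congrFun h 6
  rw [sum9] at h6
  simp only [show B3 6 0 = 0 from by decide, show B3 6 1 = 0 from by decide, show B3 6 2 = 0 from by decide, show B3 6 3 = 0 from by decide, show B3 6 4 = 0 from by decide, show B3 6 5 = 0 from by decide, show B3 6 6 = 1 from by decide, show B3 6 7 = 1 from by decide, show B3 6 8 = 0 from by decide, zero_mul, one_mul, zero_add, add_zero] at h6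
  have h8 : ∑ j, B3 8 j * c j = 0 := congrFun h 8
  rw [sum9] at h8
  simp only [show B3 8 0 = 0 from by decide, show B3 8 1 = 0 from by decide, show B3 8 2 = 0 from by decide, show B3 8 3 = 0 from by decide, show B3 8 4 = 0 from by decide, show B3 8 5 = 0 from by decide, show B3 8 6 = 0 from by decide, show B3 8 7 = 0 from by decide, show B3 8 8 = 1 from by decide, zero_mul, one_mul, zero_add, add_zero] at h8
  have hc1 : c 1 = 0 := by
    linear_combination 2*h0 - 2*h1 + 2*h2 + 2*h3 - char3 (c 1)
  have hc0 : c 0 = 0 := by linear_combination h0 - hc1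
  have hc2 : c 2 = 0 := by linear_combination h2 - hc1
  have hc3 : c 3 = 0 := by linear_combination h3 - hc1
  have hc5 : c 5 = 2 * c 4 := by linear_combination h4 - char3 (c 4)
  have hc7 : c 7 = 2 * c 6 := by linear_combination h6 - char3 (c 6)
  have hc8 : c 8 = 0 := by linear_combination h8
  exact ⟨hc0, hc1, hc2, hc3, hc5, hc7, hc8⟩

theorem inj_of_leftInv {n : ℕ} (A B : Matrix (Fin n) (Fin n) (ZMod 3)) (h : B * A = 1) :
    Function.Injective A.mulVecLin := by
  intro u v huv
  have h1 : (B * A).mulVecLin u = (B * A).mulVecLin v := by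
    rw [Matrix.mulVecLin_mul]
    simp only [LinearMap.comp_apply]
    rw [huv]
  rw [h, Matrix.mulVecLin_one] at h1
  exact h1

theorem inj_of_ker {m n : ℕ} (A : Matrix (Fin m) (Fin n) (ZMod 3))
    (h : ∀ v, A *ᵥ v = 0 → v = 0) : Function.Injective A.mulVecLin := by
  rw [← LinearMap.ker_eq_bot, LinearMap.ker_eq_bot']
  intro v hv
  exact h v hv

end Stmt10Helpers

open Stmt10Helpers in
theorem stmt_10 :
    ¬ ∃ M : Matrix (Fin 10) (Fin 9) ℤ,
      Mᵀ * ambientGram * M = rootGram := by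
  haveI : Fact (Nat.Prime 3) := ⟨by norm_num⟩
  rintro ⟨M, hM⟩
  have hM3 : (M.map φ)ᵀ * G3 * (M.map φ) = B3 := by
    have h := congrArg (fun A => A.map (φ : ℤ → ZMod 3)) hM
    simpa only [Matrix.map_mul, Matrix.transpose_map, G3, B3] using h
  set M3 : Matrix (Fin 10) (Fin 9) (ZMod 3) := M.map φ with hM3def
  by_cases hcase : ∃ c : Fin 9 → ZMod 3, c ≠ 0 ∧ M3 *ᵥ c = 0
  · -- non-injective case: mod 9 obstruction
    obtain ⟨c, hc0, hMc⟩ := hcase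
    have hBc : B3 *ᵥ c = 0 := by
      rw [← hM3, ← Matrix.mulVec_mulVec, hMc, Matrix.mulVec_zero]
    obtain ⟨k0, k1, k2, k3, k5, k7, k8⟩ := kernelB c hBc
    have hab : ¬(c 4 = 0 ∧ c 6 = 0) := by
      rintro ⟨ha0, hb0⟩
      apply hc0
      funext i
      fin_cases i
      · exact k0
      · exact k1
      · exact k2
      · exact k3
      · exact ha0
      · show c 5 = 0
        rw [k5, ha0, mul_zero]
      · exact hb0
      · show c 7 = 0
        rw [k7, hb0, mul_zero]
      · exact k8
    have hlift : ∀ i, φ (liftVec (c 4) (c 6) i) = c i := by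
      intro i
      fin_cases i
      · show φ ((0:ℤ)) = c 0
        rw [k0]; exact map_zero φ
      · show φ ((0:ℤ)) = c 1
        rw [k1]; exact map_zero φ
      · show φ ((0:ℤ)) = c 2
        rw [k2]; exact map_zero φ
      · show φ ((0:ℤ)) = c 3
        rw [k3]; exact map_zero φ
      · show (((c 4).val : ℤ) : ZMod 3) = c 4
        simp [ZMod.natCast_val, ZMod.cast_id]
      · show ((((2 * c 4) : ZMod 3).val : ℤ) : ZMod 3) = c 5
        rw [k5]
        simp [ZMod.natCast_val, ZMod.cast_id]
      · show (((c 6).val : ℤ) : ZMod 3) = c 6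
        simp [ZMod.natCast_val, ZMod.cast_id]
      · show ((((2 * c 6) : ZMod 3).val : ℤ) : ZMod 3) = c 7
        rw [k7]
        simp [ZMod.natCast_val, ZMod.cast_id]
      · show φ ((0:ℤ)) = c 8
        rw [k8]; exact map_zero φ
    set w : Fin 9 → ℤ := liftVec (c 4) (c 6) with hwdef
    have hdvd : ∀ i, ∃ y : ℤ, (M *ᵥ w) i = 3 * y := by
      intro i
      have hcast : φ ((M *ᵥ w) i) = 0 := by
        rw [RingHom.map_mulVec φ]
        have hcw : (φ : ℤ → ZMod 3) ∘ w = c := funext hlift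
        rw [hcw]
        show (M3 *ᵥ c) i = 0
        rw [hMc]
        rfl
      exact (ZMod.intCast_zmod_eq_zero_iff_dvd _ 3).mp hcast
    choose x hx using hdvd
    have hMw : M *ᵥ w = (3:ℤ) • x := by
      funext i
      simpa [smul_eq_mul] using hx i
    have key : w ⬝ᵥ (rootGram *ᵥ w) = 9 * (x ⬝ᵥ (ambientGram *ᵥ x)) := by
      have h1 : rootGram *ᵥ w = Mᵀ *ᵥ (ambientGram *ᵥ (M *ᵥ w)) := by
        rw [Matrix.mulVec_mulVec, Matrix.mulVec_mulVec, hM]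
      rw [h1, Matrix.dotProduct_mulVec, Matrix.vecMul_transpose, hMw]
      simp only [Matrix.mulVec_smul, smul_dotProduct, dotProduct_smul,
        smul_eq_mul]
      ring
    exact hq (c 4) (c 6) hab ⟨_, key⟩
  · -- injective case: rank obstruction
    have hinj : Function.Injective M3.mulVecLin := by
      apply inj_of_ker
      intro v hv
      by_contra hne
      exact hcase ⟨v, hne, hv⟩
    set Y : Matrix (Fin 2) (Fin 10) (ZMod 3) := E2 * M3ᵀ * G3 with hY
    have hYM : Y * M3 = 0 := by
      calc Y * M3 = E2 * (M3ᵀ * G3 * M3) := by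
            rw [hY, Matrix.mul_assoc, Matrix.mul_assoc, Matrix.mul_assoc]
        _ = 0 := by rw [hM3, hEB]
    have hYtinj : Function.Injective (Yᵀ).mulVecLin := by
      have hYt : Yᵀ = G3ᵀ * (M3 * E2ᵀ) := by
        rw [hY, Matrix.transpose_mul, Matrix.transpose_mul, Matrix.transpose_transpose]
      rw [hYt, Matrix.mulVecLin_mul, Matrix.mulVecLin_mul]
      simp only [LinearMap.coe_comp]
      have i1 : Function.Injective (G3ᵀ).mulVecLin := by
        apply inj_of_leftInv _ Ginvᵀ
        rw [← Matrix.transpose_mul, mul_eq_one_comm.mp hGinv, Matrix.transpose_one]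
      have i2 : Function.Injective (E2ᵀ).mulVecLin := inj_of_ker _ hEt
      exact i1.comp (hinj.comp i2)
    have hrankYt : Yᵀ.rank = 2 := by
      unfold Matrix.rank
      rw [LinearMap.finrank_range_of_inj hYtinj, Module.finrank_fin_fun]
    have hrangeY : Module.finrank (ZMod 3) (LinearMap.range Y.mulVecLin) = 2 := by
      have h2 : Y.rank = 2 := by rw [← Matrix.rank_transpose, hrankYt]
      unfold Matrix.rank at h2
      exact h2
    have hrn := LinearMap.finrank_range_add_finrank_ker Y.mulVecLin
    rw [Module.finrank_fin_fun, hrangeY] at hrn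
    have hle : LinearMap.range M3.mulVecLin ≤ LinearMap.ker Y.mulVecLin := by
      rintro u ⟨v, rfl⟩
      simp only [LinearMap.mem_ker, Matrix.mulVecLin_apply]
      rw [Matrix.mulVec_mulVec, hYM, Matrix.zero_mulVec]
    have h9 : Module.finrank (ZMod 3) (LinearMap.range M3.mulVecLin) = 9 := by
      rw [LinearMap.finrank_range_of_inj hinj, Module.finrank_fin_fun]
    have hfin := Submodule.finrank_mono hle
    omega
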